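/- arXiv:1811.02877 — 6 statements merged into one kernel-verified Lean document; each statement's English description precedes it below -/
import Mathlib

section
/- Let p be a prime, F an algebraically closed field of characteristic p, and G a finite group. Suppose K and K' are p'-residue-free normal subgroups of G, F₀ is an indecomposable projective F[G/K]-module, F₀' is an indecomposable projective F[G/K']-module, and the inflation of F₀ to G is isomorphic to the inflation of F₀' to G as F[G]-modules. Then K = K' and F₀ ≅ F₀' as F[G/K]-modules. -/
open CategoryTheory Limits

/-- A representation is indecomposable if it is nonzero and in any decomposition
as a direct sum of two representations, one factor is zero. -/
def RepIndecomposable {F : Type} [Field F] {G : Type} [Group G] (M : Rep.{0} F G) : Prop :=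
  ¬ IsZero M ∧ ∀ X Y : Rep.{0} F G, Nonempty (M ≅ X ⊞ Y) → IsZero X ∨ IsZero Y

/-- A group is `p'`-residue-free if it is generated by its elements of `p`-power order. -/
def IsPResidueFree (p : ℕ) (G : Type*) [Group G] : Prop :=
  Subgroup.closure {x : G | ∃ n : ℕ, x ^ p ^ n = 1} = ⊤

/-!
If `K' ≰ K`, then, since `K'` is generated by `p`-elements, some `p`-element `x ∈ K'` has nontrivial
image `x̄ ∈ G/K`, and `x̄` acts trivially on `F₀` because `x` acts trivially on the inflation of
`F₀'`. This is impossible for a nonzero projective `F[G/K]`-module `M`: with `N = ∑_{h ∈ ⟨x̄⟩} h`,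
every `x̄`-fixed vector of a free module, hence of its summand `M`, lies in `N • M`, while `N` acts
on `M` as `|⟨x̄⟩|`, a positive power of `p`, i.e. as `0`. Hence `K = K'`, and the isomorphism
descends because inflation along a surjection is fully faithful.
-/

universe u

namespace MonoidAlgebra

variable {k Q : Type*} [Semiring k] [Group Q]

variable (k) in
noncomputable def subgroupSum (H : Subgroup Q) [Fintype H] : MonoidAlgebra k Q :=
  ∑ h : H, single (h : Q) 1

lemma coeff_subgroupSum_mul (H : Subgroup Q) [Fintype H] (v : MonoidAlgebra k Q) (g : Q) :
    (subgroupSum k H * v).coeff g = ∑ h : H, v.coeff ((h : Q)⁻¹ * g) := by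
  simp [subgroupSum, Finset.sum_mul, coeff_sum, Finsupp.finsetSum_apply]

open Classical in
lemma exists_subgroupSum_mul_eq (H : Subgroup Q) [Fintype H] {r : MonoidAlgebra k Q}
    (hr : ∀ h ∈ H, single h 1 * r = r) : ∃ v, subgroupSum k H * v = r := by
  have hcoeff : ∀ h ∈ H, ∀ g, r.coeff (h * g) = r.coeff g := fun h hh g => by
    simpa using (congrArg (coeff · (h * g)) (hr h hh)).symm
  let rep : Q → Q := fun g => (Quotient.mk (QuotientGroup.rightRel H) g).out
  have hrep_mem (g : Q) : g * (rep g)⁻¹ ∈ H :=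
    QuotientGroup.rightRel_apply.mp (Quotient.mk_out g)
  have hrep_eq {a b : Q} (h : b * a⁻¹ ∈ H) : rep a = rep b :=
    congrArg Quotient.out (Quotient.sound (QuotientGroup.rightRel_apply.mpr h))
  -- `v` is `r` restricted to the chosen coset representatives: each coset `H g` contributes once.
  refine ⟨ofCoeff (r.coeff.filter fun g => rep g = g), ?_⟩
  ext g
  rw [coeff_subgroupSum_mul, Finset.sum_eq_single ⟨g * (rep g)⁻¹, hrep_mem g⟩]
  · have hg : (g * (rep g)⁻¹)⁻¹ * g = rep g := by group
    simp only [hg, Finsupp.filter_apply, hrep_eq (hrep_mem g), if_true]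
    simpa [hg] using hcoeff _ (inv_mem (hrep_mem g)) g
  · rintro ⟨h, hh⟩ - hne
    have hrep : rep (h⁻¹ * g) = rep g := hrep_eq (by simpa using hh)
    simp only [Finsupp.filter_apply, hrep]
    rw [if_neg]
    rintro hgh
    exact hne (Subtype.ext (show h = g * (rep g)⁻¹ by rw [hgh]; group))
  · simp

variable {M : Type*} [AddCommMonoid M] [Module (MonoidAlgebra k Q) M]

lemma exists_subgroupSum_smul_eq_of_projective [Module.Projective (MonoidAlgebra k Q) M]
    (H : Subgroup Q) [Fintype H] {m : M} (hm : ∀ h ∈ H, single h (1 : k) • m = m) :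
    ∃ m', subgroupSum k H • m' = m := by
  obtain ⟨s, hs⟩ := Module.projective_def.mp ‹Module.Projective (MonoidAlgebra k Q) M›
  have hfix (i : M) : ∀ h ∈ H, single h 1 * s m i = s m i := fun h hh => by
    simpa using congrArg (· i) (by rw [← map_smul, hm h hh] : single h (1 : k) • s m = s m)
  choose v hv using fun i => exists_subgroupSum_mul_eq H (hfix i)
  refine ⟨∑ i ∈ (s m).support, v i • i, ?_⟩
  conv_rhs => rw [← hs m, Finsupp.linearCombination_apply, Finsupp.sum]
  simp only [Finset.smul_sum, ← mul_smul, hv, id]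

lemma subsingleton_of_projective_of_forall_single_smul_eq
    [Module.Projective (MonoidAlgebra k Q) M] (H : Subgroup Q) [Fintype H]
    (hH : (Fintype.card H : k) = 0)
    (hact : ∀ h ∈ H, ∀ m : M, single h (1 : k) • m = m) : Subsingleton M := by
  have hN (m : M) : subgroupSum k H • m = 0 := by
    simp only [subgroupSum, Finset.sum_smul, Finset.sum_congr rfl fun (h : H) _ => hact h h.2 m,
      Finset.sum_const, Finset.card_univ, ← Nat.cast_smul_eq_nsmul (MonoidAlgebra k Q), natCast_def,
      hH, single_zero, zero_smul]
  refine ⟨fun a b => ?_⟩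
  obtain ⟨a', rfl⟩ := exists_subgroupSum_smul_eq_of_projective H (hact · · a)
  obtain ⟨b', rfl⟩ := exists_subgroupSum_smul_eq_of_projective H (hact · · b)
  rw [hN, hN]

end MonoidAlgebra

namespace Rep

variable {k G : Type u} [CommRing k] [Group G]

lemma isZero_of_projective_of_le_ker (M : Rep.{u} k G) [Projective M] (H : Subgroup G) [Finite H]
    (hH : (Nat.card H : k) = 0) (hker : H ≤ M.ρ.ker) : IsZero M := by
  have : Module.Projective (MonoidAlgebra k G) M.ρ.asModule :=
    (IsProjective.iff_projective _).mpr <|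
      (equivalenceModuleMonoidAlgebra.map_projective_iff M).mpr ‹_›
  have hact : ∀ h ∈ H, ∀ m : M.ρ.asModule, MonoidAlgebra.single h (1 : k) • m = m := by
    intro h hh m
    apply M.ρ.asModuleEquiv.injective
    rw [Representation.asModuleEquiv_map_smul, Representation.asAlgebraHom_single_one,
      (MonoidHom.mem_ker.mp (hker hh)), Module.End.one_apply]
  have := Fintype.ofFinite H
  have := MonoidAlgebra.subsingleton_of_projective_of_forall_single_smul_eq H
    (Nat.card_eq_fintype_card (α := H) ▸ hH) hact
  exact M.isZero_iff.mpr M.ρ.asModuleEquiv.symm.subsingleton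

lemma eq_one_of_projective_of_mem_ker {p : ℕ} (hp : p.Prime) [CharP k p] (M : Rep.{u} k G)
    [Projective M] (hM : ¬IsZero M) {x : G} (hx : x ∈ M.ρ.ker) {n : ℕ} (hxn : x ^ p ^ n = 1) :
    x = 1 := by
  obtain ⟨j, -, hj⟩ := (Nat.dvd_prime_pow hp).mp (orderOf_dvd_of_pow_eq_one hxn)
  rcases j.eq_zero_or_pos with rfl | hj0
  · exact orderOf_eq_one_iff.mp hj
  have : Finite (Subgroup.zpowers x) :=
    (isOfFinOrder_iff_pow_eq_one.mpr ⟨p ^ n, pow_pos hp.pos n, hxn⟩).finite_zpowers.to_subtype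
  refine absurd (M.isZero_of_projective_of_le_ker _ ?_ (Subgroup.zpowers_le.mpr hx)) hM
  rw [Nat.card_zpowers, hj, CharP.cast_eq_zero_iff k p]
  exact dvd_pow_self p hj0.ne'

lemma ker_ρ_le_of_iso {A B : Rep.{u} k G} (e : A ≅ B) : A.ρ.ker ≤ B.ρ.ker := by
  intro g hg
  ext w
  rw [← hom_inv_apply (e := e) (x := w), ← hom_comm_apply, MonoidHom.mem_ker.mp hg]
  rfl

end Rep

lemma IsPResidueFree.le_of_forall_mem {p : ℕ} {G : Type*} [Group G] {K L : Subgroup G}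
    (hK : IsPResidueFree p K) (h : ∀ x ∈ K, (∃ n : ℕ, x ^ p ^ n = 1) → x ∈ L) : K ≤ L := by
  rw [← K.range_subtype, MonoidHom.range_eq_map, ← hK, MonoidHom.map_closure, Subgroup.closure_le]
  rintro _ ⟨x, ⟨n, hxn⟩, rfl⟩
  exact h x x.2 ⟨n, by simpa using congrArg Subtype.val hxn⟩

lemma le_of_res_mk'_iso {p : ℕ} (hp : p.Prime) {k G : Type u} [CommRing k] [CharP k p] [Group G]
    {K L : Subgroup G} [K.Normal] [L.Normal] (hL : IsPResidueFree p L)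
    (A : Rep.{u} k (G ⧸ K)) (B : Rep.{u} k (G ⧸ L)) [Projective A] (hA : ¬IsZero A)
    (e : Rep.res (QuotientGroup.mk' K) A ≅ Rep.res (QuotientGroup.mk' L) B) : L ≤ K := by
  have hker : L ≤ A.ρ.ker.comap (QuotientGroup.mk' K) :=
    calc L = (QuotientGroup.mk' L).ker := (QuotientGroup.ker_mk' L).symm
      _ ≤ B.ρ.ker.comap (QuotientGroup.mk' L) := MonoidHom.ker_le_comap _ _
      _ ≤ A.ρ.ker.comap (QuotientGroup.mk' K) := Rep.ker_ρ_le_of_iso e.symm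
  refine hL.le_of_forall_mem fun x hx ⟨n, hxn⟩ => ?_
  rw [← QuotientGroup.eq_one_iff]
  exact A.eq_one_of_projective_of_mem_ker hp hA (hker hx) (by rw [← QuotientGroup.mk_pow, hxn]; rfl)

theorem stmt2_general (p : ℕ) (hp : p.Prime) (F : Type) [Field F] [CharP F p]
    (G : Type) [Group G] (K K' : Subgroup G) [K.Normal] [K'.Normal]
    (hK : IsPResidueFree p K) (hK' : IsPResidueFree p K')
    (F₀ : Rep.{0} F (G ⧸ K)) (F₀' : Rep.{0} F (G ⧸ K'))
    (hF₀ : RepIndecomposable F₀ ∧ Projective F₀)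
    (hF₀' : RepIndecomposable F₀' ∧ Projective F₀')
    (hiso : Nonempty
      ((Rep.res (QuotientGroup.mk' K) F₀ : Rep.{0} F G) ≅
        Rep.res (QuotientGroup.mk' K') F₀')) :
    ∃ h : K = K', Nonempty (F₀ ≅
      Rep.res
        (QuotientGroup.quotientMulEquivOfEq h).toMonoidHom F₀') := by
  obtain ⟨e⟩ := hiso
  have := hF₀.2
  have := hF₀'.2
  have h : K = K' := le_antisymm (le_of_res_mk'_iso hp hK F₀' F₀ hF₀'.1.1 e.symm)
    (le_of_res_mk'_iso hp hK' F₀ F₀' hF₀.1.1 e)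
  -- `res (mk' K) (res _ F₀')` unfolds to `res (mk' K') F₀'`, so `e` lies in the image of the
  -- fully faithful functor `resFunctor (mk' K)`.
  have := Rep.full_res (k := F) (QuotientGroup.mk' K) (QuotientGroup.mk'_surjective K)
  exact ⟨h, ⟨(Rep.resFunctor (QuotientGroup.mk' K)).preimageIso e⟩⟩

/-- if `K, K'` are `p'`-residue-free normal subgroups of `G` and `F₀, F₀'`
are indecomposable projective modules over `F[G/K]`, `F[G/K']` respectively whose
inflations to `G` are isomorphic, then `K = K'` and `F₀ ≅ F₀'` (after transporting
`F₀'` along the equality `K = K'`). -/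
theorem stmt2 (p : ℕ) (hp : p.Prime) (F : Type) [Field F] [IsAlgClosed F] [CharP F p]
    (G : Type) [Group G] [Finite G] (K K' : Subgroup G) [K.Normal] [K'.Normal]
    (hK : IsPResidueFree p K) (hK' : IsPResidueFree p K')
    (F₀ : Rep.{0} F (G ⧸ K)) (F₀' : Rep.{0} F (G ⧸ K'))
    (hF₀ : RepIndecomposable F₀ ∧ Projective F₀)
    (hF₀' : RepIndecomposable F₀' ∧ Projective F₀')
    (hiso : Nonempty
      ((Rep.res (QuotientGroup.mk' K) F₀ : Rep.{0} F G) ≅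
        Rep.res (QuotientGroup.mk' K') F₀')) :
    ∃ h : K = K', Nonempty (F₀ ≅
      Rep.res
        (QuotientGroup.quotientMulEquivOfEq h).toMonoidHom F₀') :=
  stmt2_general p hp F G K K' hK hK' F₀ F₀' hF₀ hF₀' hiso
end

section
/- Let p be a prime, F a field of characteristic p, H a finite group, and N a normal subgroup of H whose order is coprime to p. Let M be a finite-dimensional F[H]-module on which N acts trivially, regarded also as an F[H/N]-module. Then M is projective as an F[H]-module if and only if M is projective as an F[H/N]-module. -/
/-!
Inflation along `H → H ⧸ N` is fully faithful and left adjoint to taking `N`-invariants. A fully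
faithful left adjoint reflects projectivity, and it preserves projectivity as soon as its right
adjoint preserves epimorphisms. Since `|N|` is invertible in `F`, averaging over `N` lifts
`N`-invariant vectors along any surjection, so taking `N`-invariants does preserve epimorphisms.
-/

open CategoryTheory Limits

namespace Representation

variable {k G V W : Type*} [CommRing k] [Group G] [Fintype G] [Invertible (Fintype.card G : k)]
  [AddCommGroup V] [Module k V] [AddCommGroup W] [Module k W]
  {ρ : Representation k G V} {σ : Representation k G W}

theorem IsIntertwiningMap.map_averageMap {f : V →ₗ[k] W} (hf : ρ.IsIntertwiningMap σ f)
    (v : V) : f (ρ.averageMap v) = σ.averageMap (f v) := by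
  simp [GroupAlgebra.average, map_sum, hf.isIntertwining]

end Representation

namespace Rep

variable {k : Type*} [CommRing k] {G : Type*} [Group G] (S : Subgroup G) [S.Normal]

noncomputable def resQuotientAdjunction :
    resFunctor (k := k) (QuotientGroup.mk' S) ⊣ quotientToInvariantsFunctor k S :=
  Adjunction.mkOfHomEquiv
    { homEquiv X Y :=
        { toFun f := Rep.ofHom ⟨f.hom.toLinearMap.codRestrict _ fun x s => by
              change Y.ρ s (f.hom x) = f.hom x
              rw [← hom_comm_apply f s x]
              simp [(QuotientGroup.eq_one_iff _).2 s.2], fun g => by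
              induction g using QuotientGroup.induction_on
              ext x
              exact hom_comm_apply f _ x⟩
          invFun f := Rep.ofHom ⟨Submodule.subtype _ ∘ₗ f.hom.toLinearMap, fun g => by
              ext x
              exact congrArg Subtype.val (hom_comm_apply f g x)⟩
          left_inv _ := rfl
          right_inv _ := rfl }
      homEquiv_naturality_left_symm := by intros; rfl
      homEquiv_naturality_right := by intros; rfl }

instance preservesEpimorphisms_quotientToInvariantsFunctor [Fintype S]
    [Invertible (Fintype.card S : k)] : (quotientToInvariantsFunctor k S).PreservesEpimorphisms where
  preserves {X Y} e he := by
    rw [epi_iff_surjective] at he ⊢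
    rintro ⟨y, hy⟩
    obtain ⟨x, rfl⟩ := he y
    have he' : Representation.IsIntertwiningMap (X.ρ.comp S.subtype) (Y.ρ.comp S.subtype)
        e.hom.toLinearMap := ⟨fun s => hom_comm_apply e s⟩
    refine ⟨⟨_, Representation.averageMap_invariant _ x⟩, Subtype.ext ?_⟩
    exact (he'.map_averageMap x).trans (Representation.averageMap_id _ _ hy)

end Rep

theorem stmt4_general (p : ℕ) (F : Type) [Field F] [CharP F p]
    (H : Type) [Group H] [Finite H] (N : Subgroup H) [N.Normal]
    (hN : Nat.Coprime (Nat.card N) p)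
    (M : Rep.{0} F (H ⧸ N)) :
    Projective ((Rep.resFunctor (QuotientGroup.mk' N)).obj M) ↔
      Projective M := by
  have := Rep.full_res (k := F) _ (QuotientGroup.mk'_surjective N)
  have := Fintype.ofFinite N
  have : Invertible (Fintype.card N : F) :=
    invertibleOfCoprime (by rwa [← Nat.card_eq_fintype_card])
  exact ⟨(Rep.resQuotientAdjunction N).projective_of_map_projective M,
    (Rep.resQuotientAdjunction N).map_projective M⟩

/-- let `F` have characteristic `p`, `N ⊴ H` with `|N|` coprime to `p`,
and let `M` be a finite-dimensional `F[H/N]`-module (equivalently, an `F[H]`-module on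
which `N` acts trivially).  Then the inflation of `M` to `H` is projective as an
`F[H]`-module if and only if `M` is projective as an `F[H/N]`-module. -/
theorem stmt4 (p : ℕ) (hp : p.Prime) (F : Type) [Field F] [CharP F p]
    (H : Type) [Group H] [Finite H] (N : Subgroup H) [N.Normal]
    (hN : Nat.Coprime (Nat.card N) p)
    (M : Rep.{0} F (H ⧸ N)) [FiniteDimensional F M.V] :
    Projective ((Rep.resFunctor (QuotientGroup.mk' N)).obj M) ↔
      Projective M :=
  stmt4_general p F H N hN M
end

section
/- Let p be a prime, F an algebraically closed field of characteristic p, and G a finite group. If X and Y are finite-dimensional exprojective F[G]-modules, then the F[G]-module X ⊗_F Y, with G acting diagonally, is exprojective. -/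
open CategoryTheory Limits MonoidalCategory

/-- `M` is (isomorphic to) a direct summand of `N`, i.e. a retract of `N`. -/
def IsDirectSummand {C : Type*} [Category C] (M N : C) : Prop :=
  ∃ (i : M ⟶ N) (r : N ⟶ M), i ≫ r = 𝟙 M

instance {F : Type} [Field F] {G : Type} [Group G] : HasFiniteBiproducts (Rep F G) :=
  HasFiniteBiproducts.of_hasFiniteProducts

/-- A representation is exprojective if it is isomorphic to a direct summand of a
finite direct sum of permutation modules `F[G/K]` with each `K` normal in `G`. -/
def Exprojective {F : Type} [Field F] {G : Type} [Group G] (M : Rep F G) : Prop :=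
  ∃ (n : ℕ) (K : Fin n → Subgroup G), (∀ i, (K i).Normal) ∧
    IsDirectSummand M (⨁ fun i => Rep.ofMulAction F G (G ⧸ K i))

/-!
A permutation module `k[S]` splits along the `G`-orbits of `S`: restricting to the orbit of `s`
and pushing forward along `G ⧸ Stab(s) ≃ G • s` exhibit `k[S]` as a direct summand of
`⨁_orbits k[G ⧸ Stab(s)]`. As `⊗` distributes over `⨁` and
`k[G ⧸ K] ⊗ k[G ⧸ L] ≅ k[G ⧸ K × G ⧸ L]`, it remains to note that every point of
`G ⧸ K × G ⧸ L` has stabilizer `K ⊓ L`, which is normal when `K` and `L` are.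
-/

open MulAction

lemma MonoidAlgebra.coeff_mapDomain_comapDomain {R S T : Type*} [Semiring R] {f : S → T}
    (hf : Function.Injective f) (x : MonoidAlgebra R T) (t : T) [Decidable (t ∈ Set.range f)] :
    (mapDomain f (comapDomain f hf x)).coeff t = if t ∈ Set.range f then x.coeff t else 0 := by
  split_ifs with ht
  · obtain ⟨s, rfl⟩ := ht
    simp [mapDomain, Finsupp.mapDomain_apply hf, coeff_comapDomain]
  · simp [mapDomain, Finsupp.mapDomain_of_notMem_range _ _ ht]

namespace Rep

variable (k : Type) [CommRing k] {G : Type} [Group G] {S T : Type} [MulAction G S] [MulAction G T]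

noncomputable def mapDomain (f : S →[G] T) : ofMulAction k G S ⟶ ofMulAction k G T :=
  ofHom <| LinearMap.intertwiningMap_of_isIntertwiningMap _ _
    (MonoidAlgebra.mapDomainLinearMap k k f) fun g x => by
      induction x using MonoidAlgebra.induction_linear with
      | zero => simp
      | add x y hx hy => simp_all
      | single s r => simp [Representation.ofMulAction_single]

noncomputable def comapDomain (f : S →[G] T) (hf : Function.Injective f) :
    ofMulAction k G T ⟶ ofMulAction k G S :=
  ofHom <| LinearMap.intertwiningMap_of_isIntertwiningMap _ _
    { toFun := MonoidAlgebra.comapDomain f hf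
      map_add' := MonoidAlgebra.comapDomain_add f hf
      map_smul' r x := by ext; simp [MonoidAlgebra.coeff_comapDomain] }
    fun g x => by
      ext t
      simp [MonoidAlgebra.coeff_comapDomain, Representation.coeff_ofMulAction]

lemma coeff_comapDomain_comp_mapDomain_hom_apply (f : S →[G] T) (hf : Function.Injective f)
    (x : ofMulAction k G T) (t : T) [Decidable (t ∈ Set.range f)] :
    ((comapDomain k f hf ≫ mapDomain k f).hom x).coeff t =
      if t ∈ Set.range f then x.coeff t else 0 :=
  MonoidAlgebra.coeff_mapDomain_comapDomain hf x t

noncomputable def ofMulActionProdIso :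
    ofMulAction k G S ⊗ ofMulAction k G T ≅ ofMulAction k G (S × T) :=
  Functor.Monoidal.μIso (linearization k G) (Action.ofMulAction G S) (Action.ofMulAction G T)

end Rep

namespace MulAction

variable {G : Type} [Group G] {S T : Type} [MulAction G S] [MulAction G T]

def ofQuotientStabilizerHom (s : S) : G ⧸ stabilizer G s →[G] S :=
  ⟨ofQuotientStabilizer G s, ofQuotientStabilizer_smul G s⟩

lemma injective_ofQuotientStabilizerHom (s : S) :
    Function.Injective (ofQuotientStabilizerHom (G := G) s) :=
  injective_ofQuotientStabilizer G s

lemma range_ofQuotientStabilizerHom (s : S) :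
    Set.range (ofQuotientStabilizerHom (G := G) s) = orbit G s :=
  (QuotientGroup.mk_surjective.range_comp (ofQuotientStabilizer G s)).symm

lemma stabilizer_quotientGroup (K : Subgroup G) [K.Normal] (x : G ⧸ K) : stabilizer G x = K := by
  induction x using QuotientGroup.induction_on with
  | H a =>
    ext g
    rw [mem_stabilizer_iff, Quotient.smul_coe, smul_eq_mul, QuotientGroup.mk_mul, mul_eq_right,
      QuotientGroup.eq_one_iff]

lemma stabilizer_prod (s : S) (t : T) :
    stabilizer G (s, t) = stabilizer G s ⊓ stabilizer G t := by
  ext g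
  simp [Prod.ext_iff]

end MulAction

namespace IsDirectSummand

variable {C : Type*} [Category C]

lemma of_iso {M N : C} (e : M ≅ N) : IsDirectSummand M N :=
  ⟨e.hom, e.inv, e.hom_inv_id⟩

lemma trans {M N P : C} (h₁ : IsDirectSummand M N) (h₂ : IsDirectSummand N P) :
    IsDirectSummand M P := by
  obtain ⟨i₁, r₁, h₁⟩ := h₁
  obtain ⟨i₂, r₂, h₂⟩ := h₂
  exact ⟨i₁ ≫ i₂, r₂ ≫ r₁, by simp [reassoc_of% h₂, h₁]⟩

lemma tensor [MonoidalCategory C] {M N M' N' : C}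
    (h : IsDirectSummand M N) (h' : IsDirectSummand M' N') :
    IsDirectSummand (M ⊗ M') (N ⊗ N') := by
  obtain ⟨i, r, h⟩ := h
  obtain ⟨i', r', h'⟩ := h'
  exact ⟨i ⊗ₘ i', r ⊗ₘ r', by rw [tensorHom_comp_tensorHom, h, h', id_tensorHom_id]⟩

lemma biproduct [Preadditive C] [HasFiniteBiproducts C] {J : Type} [Finite J] {f g : J → C}
    (h : ∀ j, IsDirectSummand (f j) (g j)) :
    IsDirectSummand (⨁ f) (⨁ g) := by
  choose i r hir using h
  exact ⟨biproduct.map i, biproduct.map r, by ext; simp [hir]⟩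

end IsDirectSummand

namespace Rep

variable (F : Type) [Field F] {G : Type} [Group G] {S : Type} [MulAction G S]

lemma isDirectSummand_ofMulAction_biproduct_quotient_stabilizer [Finite S] :
    IsDirectSummand (ofMulAction F G S)
      (⨁ fun ω : orbitRel.Quotient G S => ofMulAction F G (G ⧸ stabilizer G ω.out)) := by
  have := Fintype.ofFinite (orbitRel.Quotient G S)
  refine ⟨biproduct.lift fun ω =>
      comapDomain F (ofQuotientStabilizerHom ω.out) (injective_ofQuotientStabilizerHom _),
    biproduct.desc fun ω => mapDomain F (ofQuotientStabilizerHom ω.out), ?_⟩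
  rw [biproduct.lift_desc]
  refine hom_ext (Representation.IntertwiningMap.ext (LinearMap.ext fun x =>
    MonoidAlgebra.ext (Finsupp.ext fun t => ?_)))
  classical
  rw [Representation.IntertwiningMap.toLinearMap_apply,
    Representation.IntertwiningMap.toLinearMap_apply, sum_hom,
    Representation.IntertwiningMap.sum_apply, MonoidAlgebra.coeff_sum, Finsupp.finsetSum_apply]
  -- `t` lies in the orbit of exactly one representative
  trans ∑ ω : orbitRel.Quotient G S, if t ∈ orbit G ω.out then x.coeff t else 0
  · exact Finset.sum_congr rfl fun ω _ => by
      rw [coeff_comapDomain_comp_mapDomain_hom_apply, range_ofQuotientStabilizerHom]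
  · simp_rw [← orbitRel_apply, ← Quotient.mk_eq_iff_out]
    simp

end Rep

namespace Exprojective

variable {F : Type} [Field F] {G : Type} [Group G]

lemma of_isDirectSummand {M N : Rep F G} (h : IsDirectSummand M N) (hN : Exprojective N) :
    Exprojective M := by
  obtain ⟨n, K, hK, hN⟩ := hN
  exact ⟨n, K, hK, h.trans hN⟩

lemma biproduct_ofMulAction_quotient {ι : Type} [Finite ι] (K : ι → Subgroup G)
    (hK : ∀ i, (K i).Normal) :
    Exprojective (⨁ fun i => Rep.ofMulAction F G (G ⧸ K i)) :=
  let e := (Finite.equivFin ι).symm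
  ⟨_, K ∘ e, fun i => hK (e i),
    .of_iso (biproduct.reindex e fun i => Rep.ofMulAction F G (G ⧸ K i)).symm⟩

lemma biproduct {ι : Type} [Finite ι] {M : ι → Rep F G} (h : ∀ i, Exprojective (M i)) :
    Exprojective (⨁ M) := by
  choose n K hK hM using h
  exact of_isDirectSummand
    ((IsDirectSummand.biproduct hM).trans (.of_iso (biproductBiproductIso _ _)))
    (biproduct_ofMulAction_quotient (fun p : Σ i, Fin (n i) => K p.1 p.2) fun p => hK _ _)

lemma ofMulAction {S : Type} [MulAction G S] [Finite S] (h : ∀ s : S, (stabilizer G s).Normal) :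
    Exprojective (Rep.ofMulAction F G S) :=
  of_isDirectSummand (Rep.isDirectSummand_ofMulAction_biproduct_quotient_stabilizer F)
    (biproduct_ofMulAction_quotient _ fun _ => h _)

lemma tensor [Finite G] {X Y : Rep F G} (hX : Exprojective X) (hY : Exprojective Y) :
    Exprojective (X ⊗ Y) := by
  obtain ⟨n, K, hK, hX⟩ := hX
  obtain ⟨m, L, hL, hY⟩ := hY
  refine of_isDirectSummand ((hX.tensor hY).trans (.of_iso (rightDistributor _ _ ≪≫
    biproduct.mapIso fun i => leftDistributor _ _))) ?_
  refine biproduct fun i => biproduct fun j =>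
    of_isDirectSummand (.of_iso (Rep.ofMulActionProdIso F)) (ofMulAction fun s => ?_)
  rw [stabilizer_prod, stabilizer_quotientGroup, stabilizer_quotientGroup]
  exact Subgroup.normal_inf_normal _ _

end Exprojective

theorem stmt5_general (F : Type) [Field F]
    (G : Type) [Group G] [Finite G] (X Y : Rep F G)
    (hX : Exprojective X) (hY : Exprojective Y) :
    Exprojective (X ⊗ Y) :=
  hX.tensor hY

/-- the tensor product (over `F`, with diagonal `G`-action) of two
finite-dimensional exprojective `F[G]`-modules is exprojective. -/
theorem stmt5 (p : ℕ) (hp : p.Prime) (F : Type) [Field F] [IsAlgClosed F] [CharP F p]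
    (G : Type) [Group G] [Finite G] (X Y : Rep F G)
    [FiniteDimensional F X.V] [FiniteDimensional F Y.V]
    (hX : Exprojective X) (hY : Exprojective Y) :
    Exprojective (X ⊗ Y) :=
  stmt5_general F G X Y hX hY
end

section
/- Let p be a prime, F a field of characteristic p, H a finite group, and M a nonzero finite-dimensional projective F[H]-module. Then the kernel of the associated representation, i.e. the subgroup of all elements of H that act as the identity on M, has order coprime to p. -/
/-!
Let `K` be the kernel and `N = ∑_{x ∈ K} x ∈ F[H]` its norm element. Since `K` acts trivially,
`N` acts on `M` as `|K|`, which is `0` in `F` if `p ∣ |K|`. On the other hand, in a projective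
`F[H]`-module every `K`-fixed vector lies in `N • M`: in `F[H]` itself a left `K`-invariant
element is constant on the right cosets `K h`, hence is `N` times its restriction to a set of
coset representatives, and this passes to direct summands of free modules. As every vector of
`M` is `K`-fixed, `M = 0`.
-/

open CategoryTheory Limits

/-- The kernel of a representation: the subgroup of elements acting as the identity. -/
def repKer {F : Type} [Field F] {G : Type} [Group G] (M : Rep F G) : Subgroup G where
  carrier := {g : G | M.ρ g = 1}
  one_mem' := by simp
  mul_mem' := by
    intro a b ha hb
    simp only [Set.mem_setOf_eq] at *
    rw [map_mul, ha, hb, one_mul]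
  inv_mem' := by
    intro a ha
    simp only [Set.mem_setOf_eq] at *
    have : M.ρ a⁻¹ * M.ρ a = 1 := by rw [← map_mul, inv_mul_cancel, map_one]
    rwa [ha, mul_one] at this

namespace MonoidAlgebra

variable (k : Type*) {H : Type*} [Semiring k] [Group H]

noncomputable def subgroupNorm (K : Subgroup H) [Fintype K] : k[H] :=
  ∑ x : K, single (x : H) 1

variable {k}

lemma exists_eq_subgroupNorm_mul {K : Subgroup H} [Fintype K] {a : k[H]}
    (ha : ∀ x ∈ K, single x (1 : k) * a = a) : ∃ b, a = subgroupNorm k K * b := by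
  classical
  let r : H → H := fun h => (Quotient.mk (QuotientGroup.rightRel K) h).out
  have hr_mem (h : H) : h * (r h)⁻¹ ∈ K :=
    QuotientGroup.rightRel_apply.mp (Quotient.exact (Quotient.out_eq _))
  have hr_mul {x : H} (hx : x ∈ K) (h : H) : r (x * h) = r h :=
    congrArg Quotient.out <| Quotient.sound <| show QuotientGroup.rightRel K (x * h) h from
      QuotientGroup.rightRel_apply.mpr (by simpa using K.inv_mem hx)
  have ha_coeff {x : H} (hx : x ∈ K) (h : H) : a.coeff (x * h) = a.coeff h := by
    simpa using congrArg (coeff · h) (ha x⁻¹ (K.inv_mem hx))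
  refine ⟨ofCoeff (a.coeff.filter fun h => r h = h), ?_⟩
  ext h
  simp only [subgroupNorm, Finset.sum_mul, coeff_sum, Finsupp.finsetSum_apply,
    coeff_single_mul_apply, one_mul, Finsupp.filter_apply]
  have hterm (x : K) :
      (if r ((x : H)⁻¹ * h) = (x : H)⁻¹ * h then a.coeff ((x : H)⁻¹ * h) else 0) =
        if x = ⟨h * (r h)⁻¹, hr_mem h⟩ then a.coeff h else 0 := by
    rw [hr_mul (K.inv_mem x.2), ha_coeff (K.inv_mem x.2)]
    congr 1
    rw [Subtype.ext_iff, eq_inv_mul_iff_mul_eq, eq_mul_inv_iff_mul_eq]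
  simp only [hterm, Finset.sum_ite_eq', Finset.mem_univ, if_true]

end MonoidAlgebra

open MonoidAlgebra in
lemma Module.Projective.exists_eq_subgroupNorm_smul {k H P : Type*} [Semiring k] [Group H]
    [AddCommMonoid P] [Module k[H] P] [Module.Projective k[H] P] {K : Subgroup H} [Fintype K]
    {x : P}
    (hx : ∀ g ∈ K, single g (1 : k) • x = x) : ∃ y, x = subgroupNorm k K • y := by
  obtain ⟨s, hs⟩ := Module.projective_def.mp ‹Module.Projective k[H] P›
  have hcoeff (m : P) : ∀ g ∈ K, single g 1 * s x m = s x m := fun g hg => by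
    rw [← smul_eq_mul, ← Finsupp.smul_apply, ← map_smul, hx g hg]
  choose b hb using fun m => exists_eq_subgroupNorm_mul (hcoeff m)
  refine ⟨(s x).sum fun m _ => b m • m, ?_⟩
  conv_lhs => rw [← hs x]
  rw [Finsupp.linearCombination_apply, Finsupp.smul_sum]
  refine Finsupp.sum_congr fun m _ => ?_
  rw [hb m, mul_smul, id]

namespace Representation

variable {k G V : Type*} [CommSemiring k] [Group G] [AddCommMonoid V] [Module k V]
  {ρ : Representation k G V}

lemma single_one_smul_of_eq_one {g : G} (hg : ρ g = 1) (v : ρ.asModule) :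
    MonoidAlgebra.single g (1 : k) • v = v := by
  rw [single_smul, one_smul, hg]
  rfl

lemma subgroupNorm_smul_of_forall_eq_one {K : Subgroup G} [Fintype K]
    (hK : ∀ g ∈ K, ρ g = 1) (v : ρ.asModule) :
    MonoidAlgebra.subgroupNorm k K • v = Fintype.card K • v := by
  simp only [MonoidAlgebra.subgroupNorm, Finset.sum_smul,
    fun g : K => single_one_smul_of_eq_one (hK g g.2) v, Finset.sum_const, Finset.card_univ]

end Representation

theorem stmt8_general (p : ℕ) (hp : p.Prime) (F : Type) [Field F] [CharP F p]
    (H : Type) [Group H] [Finite H] (M : Rep F H)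
    (hM : Nontrivial M) (hproj : Projective M) :
    Nat.Coprime (Nat.card (repKer M)) p := by
  rw [Nat.coprime_comm, hp.coprime_iff_not_dvd]
  intro hdvd
  have : Fintype (repKer M) := Fintype.ofFinite _
  have : Module.Projective (MonoidAlgebra F H) M.ρ.asModule := by
    rw [IsProjective.iff_projective]
    exact (Rep.equivalenceModuleMonoidAlgebra.map_projective_iff M).mpr hproj
  have hcard : (Fintype.card (repKer M) : F) = 0 := by
    rw [← Nat.card_eq_fintype_card, CharP.cast_eq_zero_iff F p]
    exact hdvd
  have hzero (v : M.ρ.asModule) : v = 0 := by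
    obtain ⟨w, rfl⟩ := Module.Projective.exists_eq_subgroupNorm_smul (K := repKer M) (x := v)
      fun g hg => M.ρ.single_one_smul_of_eq_one hg v
    rw [M.ρ.subgroupNorm_smul_of_forall_eq_one (fun g hg => hg), ← Nat.cast_smul_eq_nsmul F,
      hcard, zero_smul]
  exact not_nontrivial_iff_subsingleton.mpr ⟨fun v w => (hzero v).trans (hzero w).symm⟩ hM

/-- a nonzero finite-dimensional projective module over `F[H]`, with `F`
of characteristic `p`, has representation kernel of order coprime to `p`. -/
theorem stmt8 (p : ℕ) (hp : p.Prime) (F : Type) [Field F] [CharP F p]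
    (H : Type) [Group H] [Finite H] (M : Rep F H) [FiniteDimensional F M.V]
    (hM : Nontrivial M) (hproj : Projective M) :
    Nat.Coprime (Nat.card (repKer M)) p :=
  stmt8_general p hp F H M hM hproj
end

section
/- Let p be a prime, F a field of characteristic p, and G a finite group. Then every 1-dimensional F[G]-module M is exprojective: if N denotes the kernel of the representation of G on M, then the quotient G/N has order coprime to p, and M is the inflation of a projective (1-dimensional) F[G/N]-module. -/
/-!
The representation factors through `G ⧸ N` as a faithful one-dimensional representation `Q`.
An element of order `p` of `G ⧸ N` would act by a scalar `c` with `c ^ p = 1`, so `c = 1` in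
characteristic `p`; by Cauchy's theorem `p` does not divide `|G ⧸ N|`, and by Maschke's theorem
`Q` is projective. A nonzero vector of `Q` gives an epimorphism `F[G ⧸ N] ⟶ Q` from the regular
representation, which therefore splits; inflating it exhibits `M` as a retract of `F[G/N]`.
-/

open CategoryTheory Limits

instance {F : Type} [Field F] {G : Type} [Group G] (M : Rep F G) : (repKer M).Normal := by
  constructor
  intro a ha g
  show M.ρ (g * a * g⁻¹) = 1
  have ha' : M.ρ a = 1 := ha
  rw [map_mul, map_mul, ha', mul_one, ← map_mul, mul_inv_cancel, map_one]

theorem Module.End.eq_one_of_pow_eq_one_of_finrank_eq_one {F V : Type*} [Field F]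
    [AddCommGroup V] [Module F V] (p : ℕ) [ExpChar F p] (hV : Module.finrank F V = 1)
    {T : Module.End F V} (hT : T ^ p = 1) : T = 1 := by
  obtain ⟨c, rfl, -⟩ := T.existsUnique_eq_smul_id_of_finrank_eq_one hV
  have : Nontrivial V := Module.nontrivial_of_finrank_eq_succ hV
  have hc : c ^ p = 1 := by
    rw [smul_pow, ← Module.End.one_eq_id, one_pow] at hT
    exact smul_left_injective F one_ne_zero (hT.trans (one_smul F 1).symm)
  rw [(frobenius_inj F p).eq_iff.mp (hc.trans (one_pow p).symm), one_smul, Module.End.one_eq_id]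

theorem Representation.not_dvd_card_of_finrank_eq_one {F H V : Type*} [Field F] [Group H]
    [Finite H] [AddCommGroup V] [Module F V] (p : ℕ) [Fact p.Prime] [CharP F p]
    (ρ : Representation F H V) (hV : Module.finrank F V = 1) (hρ : ∀ h, ρ h = 1 → h = 1) :
    ¬ p ∣ Nat.card H := by
  intro hp
  obtain ⟨h, hh⟩ := exists_prime_orderOf_dvd_card' p hp
  have : ρ h = 1 := Module.End.eq_one_of_pow_eq_one_of_finrank_eq_one p hV <| by
    rw [← map_pow, ← hh, pow_orderOf_eq_one, map_one]
  rw [hρ h this, orderOf_one] at hh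
  exact (Fact.out : p.Prime).one_lt.ne' hh.symm

namespace Rep

section

variable {k : Type*} {G : Type*} [Field k] [Group G]

theorem leftRegularHom_surjective_of_finrank_eq_one (Q : Rep k G)
    (hQ : Module.finrank k Q.V = 1) {v : Q.V} (hv : v ≠ 0) :
    Function.Surjective (Q.leftRegularHom v).hom := fun w => by
  obtain ⟨c, rfl⟩ := (finrank_eq_one_iff_of_nonzero' v hv).mp hQ w
  exact ⟨.single 1 c, by rw [leftRegularHom_hom_single, map_one, Module.End.one_apply]⟩

theorem nonempty_retract_leftRegular_of_finrank_eq_one (Q : Rep k G) [Projective Q]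
    (hQ : Module.finrank k Q.V = 1) : Nonempty (Retract Q (leftRegular k G)) := by
  have : Nontrivial Q.V := Module.nontrivial_of_finrank_eq_succ hQ
  obtain ⟨v, hv⟩ := exists_ne (0 : Q.V)
  have : Epi (Q.leftRegularHom v) :=
    (epi_iff_surjective _).mpr (leftRegularHom_surjective_of_finrank_eq_one Q hQ hv)
  exact ⟨⟨Projective.factorThru (𝟙 Q) (Q.leftRegularHom v), Q.leftRegularHom v,
    Projective.factorThru_comp _ _⟩⟩

end

variable {F : Type} [Field F] {G : Type} [Group G]

instance isTrivial_comp_repKer_subtype (M : Rep F G) :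
    Representation.IsTrivial (M.ρ.comp (repKer M).subtype) where
  out g := g.2

theorem ofQuotient_repKer_eq_one (M : Rep F G) {x : G ⧸ repKer M}
    (hx : (M.ofQuotient (repKer M)).ρ x = 1) : x = 1 := by
  induction x using QuotientGroup.induction_on with
  | H g => exact (QuotientGroup.eq_one_iff g).mpr hx

end Rep

theorem Exprojective.of_retract_ofMulAction {F : Type} [Field F] {G : Type} [Group G]
    {M : Rep F G} (K : Subgroup G) [K.Normal] (h : Retract M (Rep.ofMulAction F G (G ⧸ K))) :
    Exprojective M :=
  let R := h.trans
    { i := biproduct.ι (fun _ : Fin 1 => Rep.ofMulAction F G (G ⧸ K)) 0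
      r := biproduct.π _ 0 }
  ⟨1, fun _ => K, fun _ => inferInstance, R.i, R.r, R.retract⟩

/-- every 1-dimensional `F[G]`-module `M` is exprojective: with `N` the
kernel of the representation, `G/N` has order coprime to `p` and `M` is the inflation
of a projective 1-dimensional `F[G/N]`-module. -/
theorem stmt12 (p : ℕ) (hp : p.Prime) (F : Type) [Field F] [CharP F p]
    (G : Type) [Group G] [Finite G] (M : Rep F G)
    (hdim : Module.finrank F M.V = 1) :
    Exprojective M ∧
    Nat.Coprime (Nat.card (G ⧸ repKer M)) p ∧
    ∃ Q : Rep F (G ⧸ repKer M), Projective Q ∧ Module.finrank F Q.V = 1 ∧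
      Nonempty (M ≅
        Rep.res (QuotientGroup.mk' (repKer M)) Q) := by
  have : Fact p.Prime := ⟨hp⟩
  set Q := M.ofQuotient (repKer M)
  have hQ : ¬ p ∣ Nat.card (G ⧸ repKer M) :=
    Q.ρ.not_dvd_card_of_finrank_eq_one p hdim fun _ => M.ofQuotient_repKer_eq_one
  -- Maschke's theorem (as a Mathlib instance) makes `Q` projective once this is known.
  have : NeZero (Nat.card (G ⧸ repKer M) : F) := ⟨(CharP.cast_eq_zero_iff F p _).not.mpr hQ⟩
  have hM : M ≅ Rep.res (QuotientGroup.mk' (repKer M)) Q := (M.resOfQuotientIso _).symm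
  obtain ⟨R⟩ := Q.nonempty_retract_leftRegular_of_finrank_eq_one hdim
  exact ⟨.of_retract_ofMulAction (repKer M) ((Retract.ofIso hM).trans (R.map (Rep.resFunctor _))),
    (hp.coprime_iff_not_dvd.mpr hQ).symm, Q, inferInstance, hdim, ⟨hM⟩⟩
end

section
/- Let p be a prime, G a finite group, P a p-subgroup of G, and K the normal closure of P in G. Suppose that P is a Sylow p-subgroup of N_K(P) = N_G(P) ∩ K. Then: (i) P is a Sylow p-subgroup of K; (ii) K is p'-residue-free, i.e. K is generated by its elements of p-power order; (iii) G = N_G(P)·K; and (iv) the composite N_G(P) → G → G/K is surjective with kernel N_K(P), so it induces an isomorphism N_G(P)/N_K(P) ≅ G/K. -/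
open Pointwise

/-!
Let `K` be the normal closure of `P`. Since `P` is a `p`-group acting on the cosets `K/P`, the
index `|K : P|` is congruent mod `p` to the number of fixed cosets, which is `|N_K(P) : P|`; so `P`
is Sylow in `K` as soon as it is Sylow in `N_K(P)`. The Frattini argument then gives
`G = N_G(P) K`, and the second isomorphism theorem identifies `N_G(P)/N_K(P)` with `G/K`.
That `K` is generated by `p`-elements holds for the normal closure of any `p`-subgroup.
-/

open Subgroup

variable {G : Type*} [Group G] {p : ℕ}

namespace IsPGroup

variable [Finite G] [Fact p.Prime] {P : Subgroup G}

theorem relIndex_normalizer_modEq_index (hP : IsPGroup p P) :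
    P.relIndex (normalizer (P : Set G)) ≡ P.index [MOD p] := by
  obtain ⟨n, hn⟩ := IsPGroup.iff_card.mp hP
  exact Sylow.card_quotient_normalizer_modEq_card_quotient hn

theorem relIndex_normalizer_inf_modEq_relIndex (hP : IsPGroup p P) {K : Subgroup G}
    (hPK : P ≤ K) :
    P.relIndex (normalizer (P : Set G) ⊓ K) ≡ P.relIndex K [MOD p] := by
  have hnorm : (normalizer (P : Set G) ⊓ K).subgroupOf K = normalizer (P.subgroupOf K : Set K) := by
    rw [inf_subgroupOf_right, subgroupOf_normalizer_eq hPK]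
  rw [← relIndex_subgroupOf inf_le_right, hnorm]
  exact relIndex_normalizer_modEq_index hP.comap_subtype

theorem not_dvd_relIndex_of_not_dvd_relIndex_normalizer_inf (hP : IsPGroup p P)
    {K : Subgroup G} (hPK : P ≤ K) (h : ¬ p ∣ P.relIndex (normalizer (P : Set G) ⊓ K)) :
    ¬ p ∣ P.relIndex K :=
  ((relIndex_normalizer_inf_modEq_relIndex hP hPK).dvd_iff dvd_rfl).not.mp h

theorem normalizer_sup_eq_top {K : Subgroup G} [K.Normal] (hP : IsPGroup p P) (hPK : P ≤ K)
    (h : ¬ p ∣ P.relIndex K) : normalizer (P : Set G) ⊔ K = ⊤ := by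
  have := Sylow.normalizer_sup_eq_top ((hP.comap_subtype (K := K)).toSylow h)
  change normalizer ((P.subgroupOf K).map K.subtype : Set G) ⊔ K = ⊤ at this
  rwa [subgroupOf_map_subtype, inf_of_le_left hPK] at this

end IsPGroup

theorem IsPGroup.isPResidueFree_normalClosure {P : Subgroup G} (hP : IsPGroup p P) :
    IsPResidueFree p (normalClosure (P : Set G)) := by
  set K := normalClosure (P : Set G)
  set S := closure {x : K | ∃ n : ℕ, x ^ p ^ n = 1}
  have hK : K ≤ S.map K.subtype := by
    refine closure_le _ |>.mpr fun c hc => ?_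
    obtain ⟨a, ha, hac⟩ := Group.mem_conjugatesOfSet_iff.mp hc
    obtain ⟨u, rfl⟩ := isConj_iff.mp hac
    obtain ⟨n, hn⟩ := hP ⟨a, ha⟩
    have hcK : u * a * u⁻¹ ∈ K := conjugatesOfSet_subset_normalClosure hc
    refine ⟨⟨_, hcK⟩, subset_closure ⟨n, Subtype.ext ?_⟩, rfl⟩
    simpa [conj_pow] using congrArg Subtype.val hn
  refine eq_top_iff.mpr fun x _ => ?_
  obtain ⟨y, hy, hyx⟩ := hK x.2
  exact Subtype.ext hyx ▸ hy

theorem QuotientGroup.mk'_comp_subtype_surjective {H N : Subgroup G} [N.Normal]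
    (h : H ⊔ N = ⊤) : Function.Surjective ((QuotientGroup.mk' N).comp H.subtype) := by
  rintro ⟨g⟩
  obtain ⟨y, hy, z, hz, rfl⟩ := mem_sup_of_normal_right.mp (h ▸ mem_top g : g ∈ H ⊔ N)
  refine ⟨⟨y, hy⟩, QuotientGroup.eq.mpr ?_⟩
  simpa using hz

theorem QuotientGroup.ker_mk'_comp_subtype (H N : Subgroup G) [N.Normal] :
    ((QuotientGroup.mk' N).comp H.subtype).ker = (H ⊓ N).subgroupOf H := by
  rw [← MonoidHom.comap_ker, QuotientGroup.ker_mk', inf_subgroupOf_left]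
  rfl

/-- let `P` be a `p`-subgroup of a finite group `G` and `K` the normal
closure of `P` in `G`.  If `P` is a Sylow `p`-subgroup of `N_K(P) = N_G(P) ⊓ K`, then:
(i) `P` is a Sylow `p`-subgroup of `K`; (ii) `K` is `p'`-residue-free; (iii)
`G = N_G(P)·K`; (iv) the composite `N_G(P) → G → G/K` is surjective with kernel
`N_K(P)`, inducing an isomorphism `N_G(P)/N_K(P) ≅ G/K`. -/
theorem stmt13 (p : ℕ) (hp : p.Prime) (G : Type) [Group G] [Finite G]
    (P : Subgroup G) (hP : IsPGroup p P)
    (hSyl : ¬ p ∣ P.relIndex ((Subgroup.normalizer (P : Set G)) ⊓ Subgroup.normalClosure (P : Set G))) :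
    (P ≤ Subgroup.normalClosure (P : Set G) ∧
      ¬ p ∣ P.relIndex (Subgroup.normalClosure (P : Set G))) ∧
    IsPResidueFree p (Subgroup.normalClosure (P : Set G)) ∧
    ((Subgroup.normalizer (P : Set G)) : Set G) * (Subgroup.normalClosure (P : Set G) : Set G) = Set.univ ∧
    (Function.Surjective
        ((QuotientGroup.mk' (Subgroup.normalClosure (P : Set G))).comp (Subgroup.normalizer (P : Set G)).subtype) ∧
      MonoidHom.ker
          ((QuotientGroup.mk' (Subgroup.normalClosure (P : Set G))).comp (Subgroup.normalizer (P : Set G)).subtype) =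
        ((Subgroup.normalizer (P : Set G)) ⊓ Subgroup.normalClosure (P : Set G)).subgroupOf (Subgroup.normalizer (P : Set G)) ∧
      Nonempty
        (((Subgroup.normalizer (P : Set G)) ⧸ MonoidHom.ker
            ((QuotientGroup.mk' (Subgroup.normalClosure (P : Set G))).comp (Subgroup.normalizer (P : Set G)).subtype))
          ≃* (G ⧸ Subgroup.normalClosure (P : Set G)))) := by
  have : Fact p.Prime := ⟨hp⟩
  have hPK : P ≤ normalClosure (P : Set G) := le_normalClosure
  have hSylK := hP.not_dvd_relIndex_of_not_dvd_relIndex_normalizer_inf hPK hSyl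
  have hsup := hP.normalizer_sup_eq_top hPK hSylK
  have hsurj := QuotientGroup.mk'_comp_subtype_surjective hsup
  refine ⟨⟨hPK, hSylK⟩, hP.isPResidueFree_normalClosure, ?_, hsurj,
    QuotientGroup.ker_mk'_comp_subtype _ _, ⟨QuotientGroup.quotientKerEquivOfSurjective _ hsurj⟩⟩
  rw [← mul_normal, hsup, coe_top]
end
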